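/- arXiv:hep-th/9307142 — 7 statements merged into one kernel-verified Lean document; each statement's English description precedes it below -/
import Mathlib

section
/- (Pointwise Moncrief decomposition.) Let V and E be finite-dimensional real inner product spaces, let J : V → V be a linear isometric isomorphism with J ∘ J = −id, let f : V → E be a linear map and f† : E → V its adjoint. Assume that J maps the range of f† into the kernel of f, i.e. J(range f†) ⊆ ker f. Then V decomposes as the direct sum of the three pairwise orthogonal subspaces (ker f ∩ J(ker f)), range f†, and J(range f†). -/
open RealInnerProductSpace

/-!
Since `ker f = (range f†)ᗮ` and the isometry `J` commutes with taking orthogonal complements,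
`ker f ∩ J(ker f) = (range f†)ᗮ ∩ (J(range f†))ᗮ`. The hypothesis `J(range f†) ⊆ ker f` says that
`range f†` and `J(range f†)` are orthogonal, so together with the common orthogonal complement of
the two they span `V`.
-/

theorem Submodule.orthogonal_inf_orthogonal_sup_sup_eq_top {𝕜 E : Type*} [RCLike 𝕜]
    [NormedAddCommGroup E] [InnerProductSpace 𝕜 E] {A B : Submodule 𝕜 E}
    [A.HasOrthogonalProjection] [B.HasOrthogonalProjection] (h : B ≤ Aᗮ) :
    Aᗮ ⊓ Bᗮ ⊔ A ⊔ B = ⊤ := by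
  have hsplit : B ⊔ (Bᗮ ⊓ Aᗮ) = Aᗮ := sup_orthogonal_inf_of_hasOrthogonalProjection h
  rw [sup_comm _ A, sup_assoc, sup_comm _ B, inf_comm, hsplit,
    sup_orthogonal_of_hasOrthogonalProjection]

theorem LinearMap.ker_eq_orthogonal_range_adjoint {𝕜 E F : Type*} [RCLike 𝕜]
    [NormedAddCommGroup E] [InnerProductSpace 𝕜 E] [FiniteDimensional 𝕜 E]
    [NormedAddCommGroup F] [InnerProductSpace 𝕜 F] [FiniteDimensional 𝕜 F] (f : E →ₗ[𝕜] F) :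
    LinearMap.ker f = (LinearMap.range (LinearMap.adjoint f))ᗮ := by
  rw [LinearMap.orthogonal_range, LinearMap.adjoint_adjoint]

theorem stmt1_general {V E : Type*} [NormedAddCommGroup V] [InnerProductSpace ℝ V]
    [FiniteDimensional ℝ V] [NormedAddCommGroup E] [InnerProductSpace ℝ E]
    [FiniteDimensional ℝ E] (J : V ≃ₗᵢ[ℝ] V)
    (f : V →ₗ[ℝ] E) (K R JR : Submodule ℝ V)
    (hK : K = LinearMap.ker f ⊓
      (LinearMap.ker f).map (J.toLinearEquiv : V →ₗ[ℝ] V))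
    (hR : R = LinearMap.range (LinearMap.adjoint f))
    (hJR : JR = R.map (J.toLinearEquiv : V →ₗ[ℝ] V))
    (hsub : JR ≤ LinearMap.ker f) :
    (∀ x ∈ K, ∀ y ∈ R, ⟪x, y⟫ = 0) ∧
    (∀ x ∈ K, ∀ y ∈ JR, ⟪x, y⟫ = 0) ∧
    (∀ x ∈ R, ∀ y ∈ JR, ⟪x, y⟫ = 0) ∧
    K ⊓ R = ⊥ ∧ K ⊓ JR = ⊥ ∧ R ⊓ JR = ⊥ ∧
    K ⊔ R ⊔ JR = ⊤ := by
  have hker : LinearMap.ker f = Rᗮ := hR ▸ f.ker_eq_orthogonal_range_adjoint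
  have hK' : K = Rᗮ ⊓ JRᗮ := by
    rw [hK, hker, Submodule.map_orthogonal_equiv, ← hJR]
  have hKR : K ⟂ R := Submodule.isOrtho_iff_le.mpr (hK' ▸ inf_le_left)
  have hKJR : K ⟂ JR := Submodule.isOrtho_iff_le.mpr (hK' ▸ inf_le_right)
  have hRJR : R ⟂ JR := (Submodule.isOrtho_iff_le.mpr (hker ▸ hsub)).symm
  simp only [← Submodule.isOrtho_iff_inner_eq]
  refine ⟨hKR, hKJR, hRJR, hKR.disjoint.eq_bot, hKJR.disjoint.eq_bot, hRJR.disjoint.eq_bot, ?_⟩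
  rw [hK']
  exact Submodule.orthogonal_inf_orthogonal_sup_sup_eq_top (hker ▸ hsub)

/-- Pointwise Moncrief decomposition: for a compatible complex structure `J` on a
finite-dimensional real inner product space `V`, a linear map `f : V → E` with
adjoint `f†`, assuming `J (range f†) ⊆ ker f`, the space `V` decomposes as the
direct sum of the pairwise orthogonal subspaces `ker f ∩ J(ker f)`, `range f†`
and `J(range f†)`. -/
theorem stmt1 {V E : Type*} [NormedAddCommGroup V] [InnerProductSpace ℝ V]
    [FiniteDimensional ℝ V] [NormedAddCommGroup E] [InnerProductSpace ℝ E]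
    [FiniteDimensional ℝ E] (J : V ≃ₗᵢ[ℝ] V) (hJ : ∀ v, J (J v) = -v)
    (f : V →ₗ[ℝ] E) (K R JR : Submodule ℝ V)
    (hK : K = LinearMap.ker f ⊓
      (LinearMap.ker f).map (J.toLinearEquiv : V →ₗ[ℝ] V))
    (hR : R = LinearMap.range (LinearMap.adjoint f))
    (hJR : JR = R.map (J.toLinearEquiv : V →ₗ[ℝ] V))
    (hsub : JR ≤ LinearMap.ker f) :
    (∀ x ∈ K, ∀ y ∈ R, ⟪x, y⟫ = 0) ∧
    (∀ x ∈ K, ∀ y ∈ JR, ⟪x, y⟫ = 0) ∧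
    (∀ x ∈ R, ∀ y ∈ JR, ⟪x, y⟫ = 0) ∧
    K ⊓ R = ⊥ ∧ K ⊓ JR = ⊥ ∧ R ⊓ JR = ⊥ ∧
    K ⊔ R ⊔ JR = ⊤ :=
  stmt1_general J f K R JR hK hR hJR hsub
end

section
/- Let V and E be finite-dimensional real inner product spaces, let J : V → V be a linear isometric isomorphism with J ∘ J = −id, let f : V → E be a linear map and f† : E → V its adjoint, and assume J(range f†) ⊆ ker f. Define Ω(x,y) = ⟪x, J y⟫. Then (i) range f† is Ω-isotropic: Ω(x,y) = 0 for all x, y ∈ range f†; (ii) J(range f†) is Ω-isotropic; and (iii) the restriction of Ω to the subspace ker f ∩ J(ker f) is nondegenerate: if x ∈ ker f ∩ J(ker f) satisfies Ω(x,y) = 0 for all y ∈ ker f ∩ J(ker f), then x = 0. -/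
open RealInnerProductSpace

/-- With `J` a compatible complex structure on the finite-dimensional real inner
product space `V`, `f : V → E` linear with adjoint `f†`, `J(range f†) ⊆ ker f`,
and `Ω(x,y) = ⟪x, J y⟫`: (i) `range f†` is `Ω`-isotropic, (ii) `J(range f†)` is
`Ω`-isotropic, and (iii) `Ω` restricted to `ker f ∩ J(ker f)` is nondegenerate. -/
theorem stmt2 {V E : Type*} [NormedAddCommGroup V] [InnerProductSpace ℝ V]
    [FiniteDimensional ℝ V] [NormedAddCommGroup E] [InnerProductSpace ℝ E]
    [FiniteDimensional ℝ E] (J : V ≃ₗᵢ[ℝ] V) (hJ : ∀ v, J (J v) = -v)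
    (f : V →ₗ[ℝ] E) (K R JR : Submodule ℝ V)
    (hK : K = LinearMap.ker f ⊓
      (LinearMap.ker f).map (J.toLinearEquiv : V →ₗ[ℝ] V))
    (hR : R = LinearMap.range (LinearMap.adjoint f))
    (hJR : JR = R.map (J.toLinearEquiv : V →ₗ[ℝ] V))
    (hsub : JR ≤ LinearMap.ker f) :
    (∀ x ∈ R, ∀ y ∈ R, ⟪x, J y⟫ = 0) ∧
    (∀ x ∈ JR, ∀ y ∈ JR, ⟪x, J y⟫ = 0) ∧
    (∀ x ∈ K, (∀ y ∈ K, ⟪x, J y⟫ = 0) → x = 0) := by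

  subst hK hR hJR
  have hiso : ∀ x ∈ LinearMap.range (LinearMap.adjoint f),
      ∀ y ∈ LinearMap.range (LinearMap.adjoint f), ⟪x, J y⟫ = 0 := by
    rintro _ ⟨a, rfl⟩ _ ⟨b, rfl⟩
    have hmem : J (LinearMap.adjoint f b) ∈ LinearMap.ker f := by
      apply hsub
      exact Submodule.mem_map_of_mem ⟨b, rfl⟩
    have : f (J (LinearMap.adjoint f b)) = 0 := hmem
    rw [LinearMap.adjoint_inner_left, this, inner_zero_right]
  refine ⟨hiso, ?_, ?_⟩
  · rintro _ ⟨x, hx, rfl⟩ _ ⟨y, hy, rfl⟩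
    have : ⟪(J.toLinearEquiv : V →ₗ[ℝ] V) x, J ((J.toLinearEquiv : V →ₗ[ℝ] V) y)⟫
        = ⟪J x, J (J y)⟫ := rfl
    rw [this]
    have := J.inner_map_map x (J y)
    rw [this]
    exact hiso x hx y hy
  · rintro x ⟨hx1, hx2⟩ hperp
    have hJx : -(J x) ∈ LinearMap.ker f ⊓
        (LinearMap.ker f).map (J.toLinearEquiv : V →ₗ[ℝ] V) := by
      constructor
      · obtain ⟨w, hw, hwx⟩ := hx2
        have hwx' : J w = x := hwx
        have : J x = J (J w) := by rw [hwx']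
        rw [this, hJ w]
        exact neg_mem (neg_mem hw)
      · refine ⟨-x, neg_mem hx1, ?_⟩
        show J (-x) = -(J x)
        simp
    have h0 := hperp _ hJx
    rw [map_neg, hJ x, neg_neg, real_inner_self_eq_norm_sq] at h0
    have : ‖x‖ = 0 := by nlinarith [norm_nonneg x]
    simpa using this
end

section
/- Let n ≥ 2 and let C* = {(x,p) ∈ ℝⁿ × ℝⁿ : (x,p) ≠ (0,0) and xⱼpₖ − xₖpⱼ = 0 for all j,k}. Define on C* the equivalence (x,p) ∼ (x',p') iff there exists a real n×n matrix A with AᵀA = 1 and det A = 1 such that x' = A x and p' = A p, and define on ℝ² ∖ {0} the equivalence (λ,μ) ≈ (λ',μ') iff (λ',μ') = (λ,μ) or (λ',μ') = (−λ,−μ). Then the map (λ,μ) ↦ (λ·e₁, μ·e₁), where e₁ = (1,0,…,0), descends to a bijection from (ℝ² ∖ {0})/≈ onto C*/∼. -/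
/-!
A point of `C*` has the form `(l • u, mu • u)` with `u` a unit vector, and for `n ≥ 2` the group
`SO(n)` is transitive on unit vectors: extend `u` to an orthonormal basis, and if the resulting
orthogonal matrix has determinant `-1`, compose it with a reflection fixing `e₁` in another
coordinate. This gives surjectivity, and also realises the sign change `(l, mu) ↦ (-l, -mu)` by a
rotation sending `e₁` to `-e₁`. Conversely an orthogonal matrix preserves dot products, so if it
maps `(l • e₁, mu • e₁)` to `(l' • e₁, mu' • e₁)` then `l'² = l²`, `mu'² = mu²` and
`l' mu' = l mu`, which force `(l', mu') = ±(l, mu)`.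
-/

open Matrix

theorem eq_or_eq_neg_of_mul_self_eq {R : Type*} [CommRing R] [NoZeroDivisors R] {a b a' b' : R}
    (ha : a' * a' = a * a) (hb : b' * b' = b * b) (hab : a' * b' = a * b) :
    (a', b') = (a, b) ∨ (a', b') = (-a, -b) := by
  simp only [Prod.mk.injEq]
  refine or_iff_not_imp_left.mpr fun hne ↦ ?_
  rcases not_and_or.mp hne with ha' | hb'
  · have ha'' : a' = -a := (mul_self_eq_mul_self_iff.mp ha).resolve_left ha'
    have ha0 : a ≠ 0 := by rintro rfl; simp_all
    have : a * (b' + b) = 0 := by linear_combination (-1 : R) * hab + b' * ha''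
    exact ⟨ha'', eq_neg_of_add_eq_zero_left ((mul_eq_zero.mp this).resolve_left ha0)⟩
  · have hb'' : b' = -b := (mul_self_eq_mul_self_iff.mp hb).resolve_left hb'
    have hb0 : b ≠ 0 := by rintro rfl; simp_all
    have : b * (a' + a) = 0 := by linear_combination (-1 : R) * hab + a' * hb''
    exact ⟨eq_neg_of_add_eq_zero_left ((mul_eq_zero.mp this).resolve_left hb0), hb''⟩

theorem exists_eq_smul_of_mul_sub_mul_eq_zero {ι K : Type*} [Field K] {x p : ι → K} (hx : x ≠ 0)
    (h : ∀ j k, x j * p k - x k * p j = 0) : ∃ c : K, p = c • x := by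
  obtain ⟨j, hj⟩ := Function.ne_iff.mp hx
  refine ⟨p j / x j, funext fun k ↦ ?_⟩
  rw [Pi.smul_apply, smul_eq_mul, div_mul_eq_mul_div, eq_div_iff hj]
  linear_combination h j k

theorem exists_dotProduct_self_eq_one_smul_eq {ι : Type*} [Fintype ι] {x : ι → ℝ} (hx : x ≠ 0) :
    ∃ r : ℝ, ∃ u : ι → ℝ, u ⬝ᵥ u = 1 ∧ x = r • u := by
  have hpos : 0 < x ⬝ᵥ x :=
    lt_of_le_of_ne (Finset.sum_nonneg fun i _ ↦ mul_self_nonneg (x i))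
      (Ne.symm (dotProduct_self_eq_zero.not.mpr hx))
  set r := √(x ⬝ᵥ x)
  have hr : r ≠ 0 := (Real.sqrt_pos.mpr hpos).ne'
  refine ⟨r, r⁻¹ • x, ?_, by rw [smul_smul, mul_inv_cancel₀ hr, one_smul]⟩
  rw [smul_dotProduct, dotProduct_smul, smul_eq_mul, smul_eq_mul, ← mul_assoc, ← mul_inv,
    Real.mul_self_sqrt hpos.le, inv_mul_cancel₀ hpos.ne']

theorem exists_dotProduct_self_eq_one_of_mul_sub_mul_eq_zero {ι : Type*} [Fintype ι]
    {x p : ι → ℝ} (hxp : (x, p) ≠ 0) (h : ∀ j k, x j * p k - x k * p j = 0) :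
    ∃ u : ι → ℝ, u ⬝ᵥ u = 1 ∧ ∃ l mu : ℝ, x = l • u ∧ p = mu • u := by
  obtain ⟨w, hw, a, b, rfl, rfl⟩ : ∃ w ≠ 0, ∃ a b : ℝ, x = a • w ∧ p = b • w := by
    by_cases hx : x = 0
    · exact ⟨p, fun hp ↦ hxp (by rw [hx, hp]; rfl), 0, 1, by rw [hx, zero_smul],
        (one_smul _ _).symm⟩
    · obtain ⟨c, rfl⟩ := exists_eq_smul_of_mul_sub_mul_eq_zero hx h
      exact ⟨x, hx, 1, c, (one_smul _ _).symm, rfl⟩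
  obtain ⟨r, u, hu, rfl⟩ := exists_dotProduct_self_eq_one_smul_eq hw
  exact ⟨u, hu, a * r, b * r, smul_smul _ _ _, smul_smul _ _ _⟩

namespace Matrix

variable {ι : Type*} [Fintype ι] [DecidableEq ι]

theorem mem_specialOrthogonalGroup_iff' {R : Type*} [CommRing R] {A : Matrix ι ι R} :
    A ∈ specialOrthogonalGroup ι R ↔ Aᵀ * A = 1 ∧ A.det = 1 := by
  rw [mem_specialOrthogonalGroup_iff, mem_orthogonalGroup_iff']

theorem exists_mem_orthogonalGroup_mulVec_single_eq {v : ι → ℝ} (i₀ : ι) (hv : v ⬝ᵥ v = 1) :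
    ∃ B ∈ orthogonalGroup ι ℝ, B *ᵥ Pi.single i₀ 1 = v := by
  have hcard : Module.finrank ℝ (EuclideanSpace ℝ ι) = Fintype.card ι := finrank_euclideanSpace
  have hv' : Orthonormal ℝ (({i₀} : Set ι).domRestrict fun _ ↦ WithLp.toLp 2 v) := by
    rw [orthonormal_iff_ite]
    rintro ⟨i, rfl⟩ ⟨j, rfl⟩
    simp only [Set.domRestrict_apply, if_true, EuclideanSpace.inner_eq_star_dotProduct]
    simpa [dotProduct_comm] using hv
  obtain ⟨b, hb⟩ := hv'.exists_orthonormalBasis_extension_of_card_eq hcard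
  refine ⟨(EuclideanSpace.basisFun ι ℝ).toBasis.toMatrix b,
    (EuclideanSpace.basisFun ι ℝ).toMatrix_orthonormalBasis_mem_orthogonal b, ?_⟩
  ext i
  simp [Module.Basis.toMatrix_apply, hb i₀ rfl]

theorem exists_mem_orthogonalGroup_det_eq_neg_one_mulVec_single (R : Type*) [CommRing R]
    [Nontrivial ι] (i₀ : ι) :
    ∃ D ∈ orthogonalGroup ι R, D.det = -1 ∧ D *ᵥ Pi.single i₀ 1 = Pi.single i₀ 1 := by
  obtain ⟨i₁, hi₁⟩ := exists_ne i₀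
  refine ⟨diagonal (Function.update 1 i₁ (-1)), ?_, ?_, ?_⟩
  · rw [mem_orthogonalGroup_iff', diagonal_transpose, diagonal_mul_diagonal, ← diagonal_one]
    congr 1
    ext i
    rcases eq_or_ne i i₁ with rfl | h <;> simp [*]
  · rw [det_diagonal, Finset.prod_update_of_mem (Finset.mem_univ _)]
    simp
  · ext i
    rcases eq_or_ne i i₀ with rfl | h <;> simp [mulVec_diagonal, Function.update_apply, hi₁.symm, *]

theorem exists_mem_specialOrthogonalGroup_mulVec_single_eq [Nontrivial ι] {v : ι → ℝ} (i₀ : ι)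
    (hv : v ⬝ᵥ v = 1) : ∃ A ∈ specialOrthogonalGroup ι ℝ, A *ᵥ Pi.single i₀ 1 = v := by
  obtain ⟨B, hB, hBv⟩ := exists_mem_orthogonalGroup_mulVec_single_eq i₀ hv
  have hdet : B.det * B.det = 1 := by
    simpa [det_mul, det_transpose] using congrArg det ((mem_orthogonalGroup_iff' ι ℝ).mp hB)
  rcases mul_self_eq_one_iff.mp hdet with hdet | hdet
  · exact ⟨B, mem_specialOrthogonalGroup_iff.mpr ⟨hB, hdet⟩, hBv⟩
  · obtain ⟨D, hD, hDdet, hDe⟩ := exists_mem_orthogonalGroup_det_eq_neg_one_mulVec_single ℝ i₀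
    refine ⟨B * D, mem_specialOrthogonalGroup_iff.mpr ⟨mul_mem hB hD, ?_⟩, ?_⟩
    · rw [det_mul, hdet, hDdet, neg_mul_neg, one_mul]
    · rw [← mulVec_mulVec, hDe, hBv]

theorem dotProduct_mulVec_mulVec_of_mem_orthogonalGroup {R : Type*} [CommRing R]
    {A : Matrix ι ι R} (hA : A ∈ orthogonalGroup ι R) (x y : ι → R) :
    (A *ᵥ x) ⬝ᵥ (A *ᵥ y) = x ⬝ᵥ y := by
  rw [← vecMul_transpose, ← dotProduct_mulVec, mulVec_mulVec, (mem_orthogonalGroup_iff' ι R).mp hA,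
    one_mulVec]

theorem eq_or_eq_neg_of_mulVec_smul_eq {R : Type*} [CommRing R] [NoZeroDivisors R]
    {A : Matrix ι ι R} (hA : A ∈ orthogonalGroup ι R) {e : ι → R} (he : e ⬝ᵥ e = 1)
    {l mu l' mu' : R} (hl : A *ᵥ (l • e) = l' • e) (hmu : A *ᵥ (mu • e) = mu' • e) :
    (l', mu') = (l, mu) ∨ (l', mu') = (-l, -mu) := by
  have key := dotProduct_mulVec_mulVec_of_mem_orthogonalGroup hA
  refine eq_or_eq_neg_of_mul_self_eq ?_ ?_ ?_
  · simpa [hl, he] using key (l • e) (l • e)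
  · simpa [hmu, he] using key (mu • e) (mu • e)
  · simpa [hl, hmu, he, mul_comm] using key (l • e) (mu • e)

end Matrix

/-- For `n ≥ 2`, the physical phase space of the `SO(n)` gauge model is a
(punctured) plane modulo `ℤ₂`: the map `(λ,μ) ↦ (λ·e₁, μ·e₁)` descends to a
bijection from `(ℝ² ∖ {0})/±` onto `C*/SO(n)`, where `C*` is the (punctured)
constraint surface `{(x,p) ≠ 0 : xⱼpₖ − xₖpⱼ = 0}` and `SO(n)` acts diagonally. -/
theorem stmt5 (n : ℕ) (hn : 2 ≤ n)
    (Cstar : Set ((Fin n → ℝ) × (Fin n → ℝ)))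
    (hC : Cstar = {q | q ≠ 0 ∧ ∀ j k : Fin n, q.1 j * q.2 k - q.1 k * q.2 j = 0})
    (sim : ((Fin n → ℝ) × (Fin n → ℝ)) → ((Fin n → ℝ) × (Fin n → ℝ)) → Prop)
    (hsim : ∀ q q', sim q q' ↔ ∃ A : Matrix (Fin n) (Fin n) ℝ,
        Aᵀ * A = 1 ∧ A.det = 1 ∧ q'.1 = A.mulVec q.1 ∧ q'.2 = A.mulVec q.2)
    (e1 : Fin n → ℝ) (he1 : e1 = fun i : Fin n => if (i : ℕ) = 0 then (1 : ℝ) else 0) :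
    (∀ l mu : ℝ, (l, mu) ≠ (0, 0) → (l • e1, mu • e1) ∈ Cstar) ∧
    (∀ l mu l' mu' : ℝ, (l, mu) ≠ (0, 0) → (l', mu') ≠ (0, 0) →
        (sim (l • e1, mu • e1) (l' • e1, mu' • e1) ↔
          ((l', mu') = (l, mu) ∨ (l', mu') = (-l, -mu)))) ∧
    (∀ q ∈ Cstar, ∃ l mu : ℝ, (l, mu) ≠ ((0 : ℝ), (0 : ℝ)) ∧
        sim (l • e1, mu • e1) q) := by
  have : Nontrivial (Fin n) := Fin.nontrivial_iff_two_le.mpr hn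
  set i₀ : Fin n := ⟨0, by omega⟩
  obtain rfl : e1 = Pi.single i₀ 1 := by
    ext i
    simp [he1, Pi.single_apply, i₀, Fin.ext_iff]
  have hsim' : ∀ q q', sim q q' ↔
      ∃ A ∈ specialOrthogonalGroup (Fin n) ℝ, q'.1 = A *ᵥ q.1 ∧ q'.2 = A *ᵥ q.2 := by
    simp only [hsim, mem_specialOrthogonalGroup_iff', and_assoc, implies_true]
  subst hC
  refine ⟨fun l mu hlmu ↦ ⟨fun h0 ↦ hlmu ?_, fun j k ↦ by simp only [Pi.smul_apply]; ring⟩,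
    fun l mu l' mu' _ _ ↦ ?_, fun q ⟨hq0, hq⟩ ↦ ?_⟩
  · simpa using congrArg (fun q ↦ (q.1 i₀, q.2 i₀)) h0
  · rw [hsim']
    constructor
    · rintro ⟨A, hA, hl, hmu⟩
      exact eq_or_eq_neg_of_mulVec_smul_eq hA.1 (by simp) hl.symm hmu.symm
    · rintro (h | h) <;> obtain ⟨rfl, rfl⟩ := Prod.ext_iff.mp h
      · exact ⟨1, one_mem _, by simp, by simp⟩
      · obtain ⟨A, hA, hAe⟩ :=
          exists_mem_specialOrthogonalGroup_mulVec_single_eq (v := -Pi.single i₀ 1) i₀ (by simp)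
        exact ⟨A, hA, by simp [mulVec_smul, hAe], by simp [mulVec_smul, hAe]⟩
  · obtain ⟨u, hu, l, mu, hx, hp⟩ := exists_dotProduct_self_eq_one_of_mul_sub_mul_eq_zero hq0 hq
    obtain ⟨A, hA, hAe⟩ := exists_mem_specialOrthogonalGroup_mulVec_single_eq i₀ hu
    refine ⟨l, mu, fun h ↦ hq0 ?_, (hsim' _ _).mpr ⟨A, hA, ?_, ?_⟩⟩
    · obtain ⟨rfl, rfl⟩ := Prod.ext_iff.mp h
      exact Prod.ext (by simp [hx]) (by simp [hp])
    · rw [mulVec_smul, hAe, hx]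
    · rw [mulVec_smul, hAe, hp]
end

section
/- Let n ≥ 2 and let z ∈ ℂⁿ with z ≠ 0. Then there exists a complex n×n matrix A with AᵀA = 1 and det A = 1 such that, writing A z = x + i p with x, p ∈ ℝⁿ, the constraint xⱼpₖ − xₖpⱼ = 0 holds for all j,k, if and only если Σⱼ zⱼ² ≠ 0. In other words, a nonzero vector of ℂⁿ lies in the saturation of the SO(n)-constraint surface under the SO(n,ℂ)-action exactly when it does not lie on the null cone D₀ = {z : Σⱼ zⱼ² = 0}. -/
/-!
The form `Q z = z ⬝ᵥ z = Σ zⱼ²` is invariant under `Aᵀ * A = 1`. On the constraint surface every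
product `w j * conj (w k)` is real, so `conj (w k) ^ 2 * Q w = Σⱼ (w j * conj (w k)) ^ 2` is a sum
of real squares; hence `Q` vanishes on the surface only at `0`. Conversely, if `Q z ≠ 0` and
`s ^ 2 = Q z`, at most two reflections `x ↦ x - (2 * (v ⬝ᵥ x) / (v ⬝ᵥ v)) • v` carry `z` to
`s • eᵢ`, which lies on the surface, and a reflection in `eᵢ` corrects the determinant.
-/

namespace Matrix

variable {K ι : Type*} [Field K] [Fintype ι] [DecidableEq ι]

-- For `v ⬝ᵥ v = 0` this is the junk value `1`, since `2 / 0 = 0`.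
def reflection (v : ι → K) : Matrix ι ι K := 1 - (2 / (v ⬝ᵥ v)) • vecMulVec v v

lemma reflection_mulVec (v x : ι → K) :
    reflection v *ᵥ x = x - (2 * (v ⬝ᵥ x) / (v ⬝ᵥ v)) • v := by
  rw [reflection, sub_mulVec, one_mulVec, smul_mulVec, vecMulVec_mulVec, op_smul_eq_smul,
    smul_smul, mul_div_right_comm]

lemma transpose_reflection (v : ι → K) : (reflection v)ᵀ = reflection v := by
  simp [reflection, transpose_sub]

lemma reflection_mulVec_reflection_mulVec {v : ι → K} (hv : v ⬝ᵥ v ≠ 0) (x : ι → K) :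
    reflection v *ᵥ (reflection v *ᵥ x) = x := by
  rw [reflection_mulVec, reflection_mulVec, dotProduct_sub, dotProduct_smul, smul_eq_mul]
  ext i
  simp only [Pi.sub_apply, Pi.smul_apply, smul_eq_mul]
  field_simp
  ring

lemma reflection_mul_self {v : ι → K} (hv : v ⬝ᵥ v ≠ 0) :
    reflection v * reflection v = 1 := by
  refine ext_of_mulVec_single fun i => ?_
  rw [← mulVec_mulVec, reflection_mulVec_reflection_mulVec hv, one_mulVec]

lemma det_reflection {v : ι → K} (hv : v ⬝ᵥ v ≠ 0) :
    (reflection v).det = -1 := by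
  have hrank_one :
      reflection v = 1 + replicateCol Unit (-(2 / (v ⬝ᵥ v)) • v) * replicateRow Unit v := by
    rw [reflection, replicateCol_smul, Matrix.smul_mul, ← vecMulVec_eq, neg_smul, ← sub_eq_add_neg]
  rw [hrank_one, det_one_add_replicateCol_mul_replicateRow, dotProduct_smul, smul_eq_mul]
  field_simp
  ring

lemma reflection_mulVec_self {v : ι → K} (hv : v ⬝ᵥ v ≠ 0) : reflection v *ᵥ v = -v := by
  rw [reflection_mulVec, mul_div_assoc, div_self hv, mul_one, two_smul, sub_add_cancel_left]

lemma reflection_sub_mulVec {a b : ι → K} (hab : a ⬝ᵥ a = b ⬝ᵥ b)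
    (h : (a - b) ⬝ᵥ (a - b) ≠ 0) : reflection (a - b) *ᵥ a = b := by
  have : (a - b) ⬝ᵥ (a - b) = 2 * ((a - b) ⬝ᵥ a) := by
    simp only [sub_dotProduct, dotProduct_sub, dotProduct_comm b a, hab]; ring
  rw [reflection_mulVec, ← this, div_self h, one_smul, sub_sub_cancel]

lemma transpose_mul_self_reflection_mul {v : ι → K} (hv : v ⬝ᵥ v ≠ 0) {O : Matrix ι ι K}
    (hO : Oᵀ * O = 1) : (reflection v * O)ᵀ * (reflection v * O) = 1 := by
  rw [transpose_mul, transpose_reflection, Matrix.mul_assoc, ← Matrix.mul_assoc (reflection v),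
    reflection_mul_self hv, Matrix.one_mul, hO]

lemma exists_transpose_mul_self_eq_one_mulVec_eq [NeZero (2 : K)] {a b : ι → K}
    (hab : a ⬝ᵥ a = b ⬝ᵥ b) (hb : b ⬝ᵥ b ≠ 0) :
    ∃ O : Matrix ι ι K, Oᵀ * O = 1 ∧ O *ᵥ a = b := by
  by_cases h : (a - b) ⬝ᵥ (a - b) = 0
  · have hplus : (a - -b) ⬝ᵥ (a - -b) ≠ 0 := by
      intro h'
      have : (a - b) ⬝ᵥ (a - b) + (a - -b) ⬝ᵥ (a - -b) = 2 * (2 * (b ⬝ᵥ b)) := by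
        simp only [sub_dotProduct, dotProduct_sub, sub_neg_eq_add, add_dotProduct, dotProduct_add,
          dotProduct_comm b a, hab]
        ring
      rw [h, h', zero_add] at this
      exact mul_ne_zero two_ne_zero (mul_ne_zero two_ne_zero hb) this.symm
    refine ⟨reflection b * reflection (a - -b), ?_, ?_⟩
    · exact transpose_mul_self_reflection_mul hb
        (by rw [transpose_reflection, reflection_mul_self hplus])
    · rw [← mulVec_mulVec, reflection_sub_mulVec (by rw [neg_dotProduct_neg, hab]) hplus,
        mulVec_neg, reflection_mulVec_self hb, neg_neg]
  · exact ⟨reflection (a - b), by rw [transpose_reflection, reflection_mul_self h],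
      reflection_sub_mulVec hab h⟩

lemma mulVec_dotProduct_mulVec_self {A : Matrix ι ι K} (hA : Aᵀ * A = 1) (v : ι → K) :
    (A *ᵥ v) ⬝ᵥ (A *ᵥ v) = v ⬝ᵥ v := by
  rw [dotProduct_mulVec, ← mulVec_transpose, mulVec_mulVec, hA, one_mulVec]

lemma exists_det_eq_one_mulVec_eq_single [IsSepClosed K] [NeZero (2 : K)] {z : ι → K}
    (hz : z ⬝ᵥ z ≠ 0) (i : ι) :
    ∃ A : Matrix ι ι K, Aᵀ * A = 1 ∧ A.det = 1 ∧ ∃ c : K, A *ᵥ z = Pi.single i c := by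
  obtain ⟨s, hs⟩ := IsSepClosed.exists_eq_mul_self (z ⬝ᵥ z)
  have hsingle : Pi.single i s ⬝ᵥ Pi.single i s = z ⬝ᵥ z := by simp [hs]
  obtain ⟨O, hO, hOz⟩ :=
    exists_transpose_mul_self_eq_one_mulVec_eq hsingle.symm (hsingle ▸ hz)
  have hdet : O.det * O.det = 1 := by
    simpa only [det_mul, det_transpose, det_one] using congrArg det hO
  rcases mul_self_eq_one_iff.mp hdet with h | h
  · exact ⟨O, hO, h, s, hOz⟩
  · have he : Pi.single i (1 : K) ⬝ᵥ Pi.single i 1 ≠ 0 := by simp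
    refine ⟨reflection (Pi.single i 1) * O, transpose_mul_self_reflection_mul he hO, ?_, -s, ?_⟩
    · rw [det_mul, det_reflection he, h, neg_one_mul, neg_neg]
    · have hs_single : Pi.single i s = s • Pi.single i (1 : K) := by
        rw [← Pi.single_smul', smul_eq_mul, mul_one]
      rw [← mulVec_mulVec, hOz, hs_single, mulVec_smul, reflection_mulVec_self he, smul_neg,
        ← hs_single, Pi.single_neg]

end Matrix

open Matrix ComplexConjugate

def OnConstraintSurface {ι : Type*} (w : ι → ℂ) : Prop :=
  ∀ j k, (w j).re * (w k).im - (w k).re * (w j).im = 0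

lemma onConstraintSurface_single {ι : Type*} [DecidableEq ι] (i : ι) (c : ℂ) :
    OnConstraintSurface (Pi.single i c) := by
  intro j k
  by_cases hj : j = i <;> by_cases hk : k = i <;> simp [hj, hk]

lemma OnConstraintSurface.eq_zero_of_dotProduct_self_eq_zero {ι : Type*} [Fintype ι]
    {w : ι → ℂ} (hw : OnConstraintSurface w) (h0 : w ⬝ᵥ w = 0) : w = 0 := by
  funext k
  have hreal : ∀ j, w j * conj (w k) = ((w j * conj (w k)).re : ℂ) := fun j => by
    apply Complex.ext
    · simp
    · simp only [Complex.mul_im, Complex.conj_re, Complex.conj_im, Complex.ofReal_im]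
      linarith [hw j k]
  have hsum : ∑ j, (w j * conj (w k)).re ^ 2 = 0 := by
    have hcast : ((∑ j, (w j * conj (w k)).re ^ 2 : ℝ) : ℂ) = conj (w k) ^ 2 * (w ⬝ᵥ w) := by
      push_cast
      simp only [← hreal, dotProduct, Finset.mul_sum]
      exact Finset.sum_congr rfl fun j _ => by ring
    rw [h0, mul_zero] at hcast
    exact_mod_cast hcast
  have hk := (Finset.sum_eq_zero_iff_of_nonneg (fun j _ => sq_nonneg _)).mp hsum k
    (Finset.mem_univ k)
  simpa [Complex.mul_conj] using hk

theorem stmt7_general (n : ℕ) (z : Fin n → ℂ) (hz : z ≠ 0) :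
    (∃ A : Matrix (Fin n) (Fin n) ℂ, Aᵀ * A = 1 ∧ A.det = 1 ∧
        ∀ j k : Fin n,
          (A.mulVec z j).re * (A.mulVec z k).im
            - (A.mulVec z k).re * (A.mulVec z j).im = 0) ↔
      (∑ j, z j ^ 2) ≠ 0 := by
  rw [show ∑ j, z j ^ 2 = z ⬝ᵥ z by simp only [dotProduct, sq]]
  constructor
  · rintro ⟨A, hA, -, hAz⟩ hzz
    have hAz0 : A *ᵥ z = 0 := OnConstraintSurface.eq_zero_of_dotProduct_self_eq_zero hAz
      (by rw [mulVec_dotProduct_mulVec_self hA, hzz])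
    apply hz
    rw [← one_mulVec z, ← hA, ← mulVec_mulVec, hAz0, mulVec_zero]
  · intro hzz
    obtain ⟨i, -⟩ := Function.ne_iff.mp hz
    obtain ⟨A, hA, hdet, c, hAz⟩ := exists_det_eq_one_mulVec_eq_single hzz i
    exact ⟨A, hA, hdet, hAz ▸ onConstraintSurface_single i c⟩

/-- A nonzero `z ∈ ℂⁿ` (`n ≥ 2`) can be moved by some `A ∈ SO(n,ℂ)` onto the
`SO(n)` constraint surface (writing `A z = x + i p`, the constraints
`xⱼpₖ − xₖpⱼ = 0` hold) if and only if `Σⱼ zⱼ² ≠ 0`, i.e. exactly when `z` does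
not lie on the null cone `D₀`. -/
theorem stmt7 (n : ℕ) (hn : 2 ≤ n) (z : Fin n → ℂ) (hz : z ≠ 0) :
    (∃ A : Matrix (Fin n) (Fin n) ℂ, Aᵀ * A = 1 ∧ A.det = 1 ∧
        ∀ j k : Fin n,
          (A.mulVec z j).re * (A.mulVec z k).im
            - (A.mulVec z k).re * (A.mulVec z j).im = 0) ↔
      (∑ j, z j ^ 2) ≠ 0 :=
  stmt7_general n z hz
end

section
/- Let n ≥ 2. Suppose (x,p) and (x',p') are points of ℝⁿ × ℝⁿ, each nonzero and each satisfying the constraints xⱼpₖ − xₖpⱼ = 0 (respectively x'ⱼp'ₖ − x'ₖp'ⱼ = 0) for all j,k. If there exists a complex n×n matrix A with AᵀA = 1 and det A = 1 such that x' + i p' = A (x + i p), then there exists a real n×n matrix B with BᵀB = 1 and det B = 1 such that x' = B x and p' = B p. That is, each SO(n,ℂ)-orbit intersects the constraint surface in at most one SO(n)-orbit. -/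
/-!
Since `AᵀA = 1`, the complex bilinear square `z ⬝ᵥ z = |x|² - |p|² + 2i x⬝p` of `z = x + ip` is
`SO(n,ℂ)`-invariant. On the constraint surface `x` and `p` are parallel, so `(x⬝p)² = |x|²|p|²`;
together with `|x|² - |p|²` this pins down `|x|² + |p|²`, hence the whole Gram matrix of `(x, p)`.
Parallel pairs with the same Gram matrix are related by a rotation: a product of two Householder
reflections sends `x` to `x'` (and then `p ∥ x` to `p' ∥ x'`), the second one fixing `x` and making
the determinant `1`.
-/

open Matrix

section Householder

variable {K ι : Type*} [Field K] [Fintype ι] [DecidableEq ι]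

def householder (w : ι → K) : Matrix ι ι K :=
  1 - (2 / (w ⬝ᵥ w)) • vecMulVec w w

lemma householder_transpose (w : ι → K) : (householder w)ᵀ = householder w := by
  simp [householder]

lemma householder_mulVec (w v : ι → K) :
    householder w *ᵥ v = v - (2 / (w ⬝ᵥ w) * (w ⬝ᵥ v)) • w := by
  simp [householder, sub_mulVec, smul_mulVec, vecMulVec_mulVec, smul_smul, mul_comm]

lemma householder_mul_self {w : ι → K} (hw : w ⬝ᵥ w ≠ 0) :
    householder w * householder w = 1 := by
  have hsq : vecMulVec w w * vecMulVec w w = (w ⬝ᵥ w) • vecMulVec w w := by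
    rw [vecMulVec_mul_vecMulVec, vecMulVec_smul]
  simp only [householder, sub_mul, mul_sub, one_mul, mul_one, smul_mul, Matrix.mul_smul, hsq,
    smul_smul]
  rw [div_mul_cancel₀ 2 hw]
  module

lemma det_householder {w : ι → K} (hw : w ⬝ᵥ w ≠ 0) : (householder w).det = -1 := by
  rw [householder, sub_eq_add_neg, ← neg_smul, vecMulVec_eq Unit, ← smul_mul,
    ← replicateCol_smul, det_one_add_replicateCol_mul_replicateRow, dotProduct_smul,
    smul_eq_mul, neg_mul, div_mul_cancel₀ 2 hw]
  ring

lemma householder_mulVec_of_dotProduct_eq_zero {w v : ι → K} (h : w ⬝ᵥ v = 0) :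
    householder w *ᵥ v = v := by
  simp [householder_mulVec, h]

lemma householder_sub_mulVec {v v' : ι → K} (h : v ⬝ᵥ v = v' ⬝ᵥ v')
    (hne : (v - v') ⬝ᵥ (v - v') ≠ 0) : householder (v - v') *ᵥ v = v' := by
  have hw : (v - v') ⬝ᵥ (v - v') = 2 * ((v - v') ⬝ᵥ v) := by
    simp only [sub_dotProduct, dotProduct_sub, dotProduct_comm v' v]
    linear_combination -h
  obtain ⟨h2, hwv⟩ := mul_ne_zero_iff.mp (hw ▸ hne)
  rw [householder_mulVec, hw, div_mul_eq_mul_div, mul_div_mul_left _ _ h2, div_self hwv,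
    one_smul, sub_sub_cancel]

end Householder

section Wedge

variable {R ι : Type*} [CommRing R] [Fintype ι] {x p : ι → R}

lemma dotProduct_self_smul_eq_of_wedge_eq_zero (hc : ∀ j k, x j * p k - x k * p j = 0) :
    (x ⬝ᵥ x) • p = (x ⬝ᵥ p) • x := by
  ext k
  simp only [Pi.smul_apply, smul_eq_mul, dotProduct, Finset.sum_mul]
  exact Finset.sum_congr rfl fun j _ => by linear_combination x j * hc j k

lemma dotProduct_mul_self_eq_of_wedge_eq_zero (hc : ∀ j k, x j * p k - x k * p j = 0) :
    (x ⬝ᵥ p) * (x ⬝ᵥ p) = (x ⬝ᵥ x) * (p ⬝ᵥ p) := by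
  simpa [smul_dotProduct] using
    (congrArg (· ⬝ᵥ p) (dotProduct_self_smul_eq_of_wedge_eq_zero hc)).symm

end Wedge

section Rotation

variable {K ι : Type*} [Field K] [LinearOrder K] [IsStrictOrderedRing K] [Fintype ι]
  [DecidableEq ι] [Nontrivial ι]

lemma exists_specialOrthogonal_mulVec_eq {v v' : ι → K} (h : v ⬝ᵥ v = v' ⬝ᵥ v') :
    ∃ B : Matrix ι ι K, Bᵀ * B = 1 ∧ B.det = 1 ∧ B *ᵥ v = v' := by
  by_cases hvv : v = v'
  · exact ⟨1, by simp, by simp, by simp [hvv]⟩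
  obtain ⟨u, hu, huv⟩ := exists_ne_zero_dotProduct_eq_zero v
  have huu : u ⬝ᵥ u ≠ 0 := dotProduct_self_eq_zero.not.mpr hu
  have hww : (v - v') ⬝ᵥ (v - v') ≠ 0 := dotProduct_self_eq_zero.not.mpr (sub_ne_zero.mpr hvv)
  -- the reflection in `u⊥` fixes `v` and corrects the determinant
  refine ⟨householder (v - v') * householder u, ?_, ?_, ?_⟩
  · rw [transpose_mul, householder_transpose, householder_transpose, mul_assoc,
      ← mul_assoc (householder (v - v')), householder_mul_self hww, one_mul,
      householder_mul_self huu]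
  · rw [det_mul, det_householder hww, det_householder huu]
    norm_num
  · rw [← mulVec_mulVec, householder_mulVec_of_dotProduct_eq_zero huv,
      householder_sub_mulVec h hww]

lemma exists_specialOrthogonal_of_wedge_eq_zero {x p x' p' : ι → K}
    (hc : ∀ j k, x j * p k - x k * p j = 0) (hc' : ∀ j k, x' j * p' k - x' k * p' j = 0)
    (hxx : x ⬝ᵥ x = x' ⬝ᵥ x') (hpp : p ⬝ᵥ p = p' ⬝ᵥ p') (hxp : x ⬝ᵥ p = x' ⬝ᵥ p') :
    ∃ B : Matrix ι ι K, Bᵀ * B = 1 ∧ B.det = 1 ∧ x' = B *ᵥ x ∧ p' = B *ᵥ p := by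
  by_cases hx : x = 0
  · have hx' : x' = 0 := dotProduct_self_eq_zero.mp (by rw [← hxx, hx, zero_dotProduct])
    obtain ⟨B, hBo, hBdet, hBp⟩ := exists_specialOrthogonal_mulVec_eq hpp
    exact ⟨B, hBo, hBdet, by rw [hx, hx', mulVec_zero], hBp.symm⟩
  obtain ⟨B, hBo, hBdet, hBx⟩ := exists_specialOrthogonal_mulVec_eq hxx
  refine ⟨B, hBo, hBdet, hBx.symm,
    smul_right_injective _ (dotProduct_self_eq_zero.not.mpr hx) ?_⟩
  calc (x ⬝ᵥ x) • p' = (x' ⬝ᵥ p') • x' := by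
        rw [hxx, dotProduct_self_smul_eq_of_wedge_eq_zero hc']
    _ = B *ᵥ ((x ⬝ᵥ x) • p) := by
        rw [← hxp, dotProduct_self_smul_eq_of_wedge_eq_zero hc, mulVec_smul, hBx]
    _ = (x ⬝ᵥ x) • B *ᵥ p := mulVec_smul _ _ _

end Rotation

lemma eq_and_eq_of_sub_eq_of_mul_eq {K : Type*} [CommRing K] [LinearOrder K]
    [IsStrictOrderedRing K] {a b a' b' : K} (hsub : a - b = a' - b') (hmul : a * b = a' * b')
    (h : 0 ≤ a + b) (h' : 0 ≤ a' + b') : a = a' ∧ b = b' := by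
  have hsum : a + b = a' + b' := by
    refine (pow_left_inj₀ h h' two_ne_zero).mp ?_
    -- `(a + b)² = (a - b)² + 4ab`
    linear_combination (a - b + (a' - b')) * hsub + 4 * hmul
  constructor <;> linarith

lemma dotProduct_mulVec_mulVec_of_transpose_mul_self {R ι : Type*} [CommSemiring R] [Fintype ι]
    [DecidableEq ι] {A : Matrix ι ι R} (hA : Aᵀ * A = 1) (z w : ι → R) :
    A *ᵥ z ⬝ᵥ A *ᵥ w = z ⬝ᵥ w := by
  rw [dotProduct_mulVec, ← mulVec_transpose, mulVec_mulVec, hA, one_mulVec]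

section ToComplex

variable {ι : Type*} [Fintype ι]

def toComplex (x p : ι → ℝ) : ι → ℂ := fun j => (x j : ℂ) + Complex.I * (p j : ℂ)

lemma re_toComplex_dotProduct_self (x p : ι → ℝ) :
    (toComplex x p ⬝ᵥ toComplex x p).re = x ⬝ᵥ x - p ⬝ᵥ p := by
  simp [toComplex, dotProduct, Complex.re_sum]

lemma im_toComplex_dotProduct_self (x p : ι → ℝ) :
    (toComplex x p ⬝ᵥ toComplex x p).im = 2 * (x ⬝ᵥ p) := by
  simp [toComplex, dotProduct, Complex.im_sum, two_mul, Finset.sum_add_distrib, mul_comm]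

end ToComplex

theorem stmt8_general (n : ℕ) (hn : 2 ≤ n) (x p x' p' : Fin n → ℝ)
    (hc : ∀ j k : Fin n, x j * p k - x k * p j = 0)
    (hc' : ∀ j k : Fin n, x' j * p' k - x' k * p' j = 0)
    (A : Matrix (Fin n) (Fin n) ℂ) (hA : Aᵀ * A = 1)
    (horb : (fun j => (x' j : ℂ) + Complex.I * (p' j : ℂ)) =
        A.mulVec fun j => (x j : ℂ) + Complex.I * (p j : ℂ)) :
    ∃ B : Matrix (Fin n) (Fin n) ℝ, Bᵀ * B = 1 ∧ B.det = 1 ∧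
      x' = B.mulVec x ∧ p' = B.mulVec p := by
  have : Nontrivial (Fin n) := Fin.nontrivial_iff_two_le.mpr hn
  have hform : toComplex x' p' ⬝ᵥ toComplex x' p' = toComplex x p ⬝ᵥ toComplex x p := by
    have horb' : toComplex x' p' = A *ᵥ toComplex x p := horb
    rw [horb']
    exact dotProduct_mulVec_mulVec_of_transpose_mul_self hA _ _
  have hre := congrArg Complex.re hform
  have him := congrArg Complex.im hform
  rw [re_toComplex_dotProduct_self, re_toComplex_dotProduct_self] at hre
  rw [im_toComplex_dotProduct_self, im_toComplex_dotProduct_self] at him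
  have hxp : x ⬝ᵥ p = x' ⬝ᵥ p' := by linarith
  have hmul : (x ⬝ᵥ x) * (p ⬝ᵥ p) = (x' ⬝ᵥ x') * (p' ⬝ᵥ p') := by
    rw [← dotProduct_mul_self_eq_of_wedge_eq_zero hc,
      ← dotProduct_mul_self_eq_of_wedge_eq_zero hc', hxp]
  obtain ⟨hxx, hpp⟩ := eq_and_eq_of_sub_eq_of_mul_eq hre.symm hmul
    (add_nonneg (dotProduct_star_self_nonneg x) (dotProduct_star_self_nonneg p))
    (add_nonneg (dotProduct_star_self_nonneg x') (dotProduct_star_self_nonneg p'))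
  exact exists_specialOrthogonal_of_wedge_eq_zero hc hc' hxx hpp hxp

/-- Each `SO(n,ℂ)`-orbit intersects the `SO(n)` constraint surface in at most
one `SO(n)`-orbit: if two nonzero constrained points `(x,p)` and `(x',p')` of
`ℝⁿ × ℝⁿ ≅ ℂⁿ` are related by some `A ∈ SO(n,ℂ)`, then they are related by some
real `B ∈ SO(n)` acting diagonally. -/
theorem stmt8 (n : ℕ) (hn : 2 ≤ n) (x p x' p' : Fin n → ℝ)
    (h1 : (x, p) ≠ 0) (h2 : (x', p') ≠ 0)
    (hc : ∀ j k : Fin n, x j * p k - x k * p j = 0)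
    (hc' : ∀ j k : Fin n, x' j * p' k - x' k * p' j = 0)
    (A : Matrix (Fin n) (Fin n) ℂ) (hA : Aᵀ * A = 1) (hdet : A.det = 1)
    (horb : (fun j => (x' j : ℂ) + Complex.I * (p' j : ℂ)) =
        A.mulVec fun j => (x j : ℂ) + Complex.I * (p j : ℂ)) :
    ∃ B : Matrix (Fin n) (Fin n) ℝ, Bᵀ * B = 1 ∧ B.det = 1 ∧
      x' = B.mulVec x ∧ p' = B.mulVec p :=
  stmt8_general n hn x p x' p' hc hc' A hA horb
end

section
/- Let n ≥ 3. The complex special orthogonal group acts transitively on the set of nonzero null vectors: for any z, z' ∈ ℂⁿ with z ≠ 0, z' ≠ 0, Σⱼ zⱼ² = 0 and Σⱼ z'ⱼ² = 0, there exists a complex n×n matrix A with AᵀA = 1 and det A = 1 such that A z = z'. That is, D₀ ∖ {0} is a single SO(n,ℂ)-orbit when n ≥ 3. -/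
/-!
Over a field of characteristic different from 2, the reflection in the anisotropic vector `x - y`
exchanges two isotropic vectors `x`, `y` with `x ⬝ᵥ y ≠ 0`. Its determinant is `-1`, so it is
composed with the reflection in an anisotropic vector orthogonal to `y`, which exists as soon as
there are at least three coordinates. If `x ⬝ᵥ y = 0`, one passes through an isotropic `w` with
`x ⬝ᵥ w ≠ 0 ≠ w ⬝ᵥ y`, using the two reflections `x ↦ w ↦ y`.
-/

open Matrix Finset

namespace Matrix

theorem exists_dotProduct_ne_zero_and_ne_zero {R ι : Type*} [CommRing R] [Fintype ι]
    {x y : ι → R} (hx : x ≠ 0) (hy : y ≠ 0) : ∃ u, x ⬝ᵥ u ≠ 0 ∧ y ⬝ᵥ u ≠ 0 := by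
  let ann (v : ι → R) := LinearMap.ker (dotProductBilin R R v)
  have hproper {v : ι → R} (hv : v ≠ 0) : ¬ (⊤ : Submodule R (ι → R)) ≤ ann v :=
    fun h => hv (dotProduct_eq_zero v fun w => h Submodule.mem_top)
  by_contra! h
  have hcover : ((⊤ : Submodule R (ι → R)) : Set (ι → R)) ⊆ ann x ∪ ann y :=
    fun u _ => (em (x ⬝ᵥ u = 0)).imp id (h u)
  exact (AddSubgroupClass.subset_union.mp hcover).elim (hproper hx) (hproper hy)

variable {K ι : Type*} [Field K] [Fintype ι]

theorem sub_dotProduct_sub_of_isotropic {x y : ι → K} (hx : x ⬝ᵥ x = 0)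
    (hy : y ⬝ᵥ y = 0) : (x - y) ⬝ᵥ (x - y) = -(2 * (x ⬝ᵥ y)) := by
  rw [sub_dotProduct, dotProduct_sub, dotProduct_sub, hx, hy, dotProduct_comm y x]
  ring

theorem sub_dotProduct_sub_ne_zero [NeZero (2 : K)] {x y : ι → K} (hx : x ⬝ᵥ x = 0)
    (hy : y ⬝ᵥ y = 0) (hxy : x ⬝ᵥ y ≠ 0) : (x - y) ⬝ᵥ (x - y) ≠ 0 := by
  rw [sub_dotProduct_sub_of_isotropic hx hy]
  exact neg_ne_zero.mpr (mul_ne_zero two_ne_zero hxy)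

theorem exists_isotropic_dotProduct_ne_zero [NeZero (2 : K)] {x y : ι → K} (hx0 : x ≠ 0)
    (hy0 : y ≠ 0) (hx : x ⬝ᵥ x = 0) (hxy : x ⬝ᵥ y = 0) :
    ∃ w, w ⬝ᵥ w = 0 ∧ x ⬝ᵥ w ≠ 0 ∧ w ⬝ᵥ y ≠ 0 := by
  obtain ⟨u, hxu, hyu⟩ := exists_dotProduct_ne_zero_and_ne_zero hx0 hy0
  -- adding a multiple of the isotropic `x` to `u` changes `u ⬝ᵥ u` affinely, so it can be made
  -- `0`, and changes neither `x ⬝ᵥ u` nor `u ⬝ᵥ y`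
  refine ⟨u - ((u ⬝ᵥ u) / (2 * (x ⬝ᵥ u))) • x, ?_, ?_, ?_⟩
  · rw [sub_dotProduct, dotProduct_sub, dotProduct_sub, dotProduct_smul, smul_dotProduct,
      smul_dotProduct, dotProduct_smul, hx, dotProduct_comm u x]
    simp only [smul_eq_mul, mul_zero]
    field_simp
    ring
  · rwa [dotProduct_sub, dotProduct_smul, hx, smul_zero, sub_zero]
  · rwa [sub_dotProduct, smul_dotProduct, hxy, smul_zero, sub_zero, dotProduct_comm]

variable [DecidableEq ι]

theorem exists_anisotropic_dotProduct_eq_zero [NeZero (2 : K)] (hcard : 3 ≤ Fintype.card ι)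
    {v : ι → K} (hv : v ≠ 0) : ∃ u, u ⬝ᵥ v = 0 ∧ u ⬝ᵥ u ≠ 0 := by
  obtain ⟨i, hi⟩ := Function.ne_iff.mp hv
  obtain ⟨j, hj, k, hk, hjk⟩ : ∃ j ∈ univ.erase i, ∃ k ∈ univ.erase i, j ≠ k := by
    apply one_lt_card.mp
    rw [card_erase_of_mem (mem_univ i), card_univ]
    omega
  rw [mem_erase] at hj hk
  -- each `w a` is orthogonal to `v`; if `w j`, `w k` are both isotropic then
  -- `v j ^ 2 = v k ^ 2 = -v i ^ 2 ≠ 0` and `(w j + w k) ⬝ᵥ (w j + w k) = 2 * v j * v k ≠ 0`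
  let w (a : ι) : ι → K := v a • Pi.single i 1 - v i • Pi.single a 1
  have hwv (a : ι) : w a ⬝ᵥ v = 0 := by
    simp only [w, sub_dotProduct, smul_dotProduct, single_one_dotProduct, smul_eq_mul]
    ring
  have hww {a : ι} (ha : a ≠ i) : w a ⬝ᵥ w a = v a * v a + v i * v i := by
    simp [w, dotProduct_sub, ha.symm]
  have hwjk : w j ⬝ᵥ w k = v j * v k := by
    simp [w, dotProduct_sub, hj.1.symm, hk.1, hjk, mul_comm]
  by_cases hjj : w j ⬝ᵥ w j ≠ 0
  · exact ⟨w j, hwv j, hjj⟩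
  by_cases hkk : w k ⬝ᵥ w k ≠ 0
  · exact ⟨w k, hwv k, hkk⟩
  rw [not_not, hww hj.1] at hjj
  rw [not_not, hww hk.1] at hkk
  have hvj : v j ≠ 0 := fun h => by simp_all
  have hvk : v k ≠ 0 := fun h => by simp_all
  refine ⟨w j + w k, by rw [add_dotProduct, hwv, hwv, add_zero], ?_⟩
  rw [add_dotProduct, dotProduct_add, dotProduct_add, dotProduct_comm (w k), hwjk, hww hj.1,
    hww hk.1, hjj, hkk, zero_add, add_zero, ← two_mul]
  exact mul_ne_zero two_ne_zero (mul_ne_zero hvj hvk)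

noncomputable def dotReflection (v : ι → K) : Matrix ι ι K :=
  1 - (2 / (v ⬝ᵥ v)) • vecMulVec v v

theorem transpose_dotReflection (v : ι → K) : (dotReflection v)ᵀ = dotReflection v := by
  simp [dotReflection, transpose_sub, transpose_smul]

theorem dotReflection_mulVec (v x : ι → K) :
    dotReflection v *ᵥ x = x - (2 * (v ⬝ᵥ x) / (v ⬝ᵥ v)) • v := by
  rw [dotReflection, sub_mulVec, one_mulVec, smul_mulVec, vecMulVec_mulVec, op_smul_eq_smul,
    smul_smul, div_mul_eq_mul_div₀]

theorem dotReflection_mul_self {v : ι → K} (hv : v ⬝ᵥ v ≠ 0) :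
    dotReflection v * dotReflection v = 1 := by
  have hsq : vecMulVec v v * vecMulVec v v = (v ⬝ᵥ v) • vecMulVec v v := by
    rw [vecMulVec_mul_vecMulVec, vecMulVec_smul]
  have hc : 2 / (v ⬝ᵥ v) * (2 / (v ⬝ᵥ v)) * (v ⬝ᵥ v) = 2 / (v ⬝ᵥ v) + 2 / (v ⬝ᵥ v) := by
    field_simp; ring
  rw [dotReflection, sub_mul, one_mul, mul_sub, mul_one, Matrix.smul_mul, Matrix.mul_smul, hsq,
    smul_smul, smul_smul, hc, add_smul]
  abel

theorem det_dotReflection {v : ι → K} (hv : v ⬝ᵥ v ≠ 0) : (dotReflection v).det = -1 := by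
  rw [dotReflection, sub_eq_add_neg, ← neg_smul, ← smul_vecMulVec, vecMulVec_eq Unit,
    det_one_add_replicateCol_mul_replicateRow, dotProduct_smul, smul_eq_mul, neg_mul,
    div_mul_cancel₀ _ hv]
  ring

theorem dotReflection_mem_orthogonalGroup {v : ι → K} (hv : v ⬝ᵥ v ≠ 0) :
    dotReflection v ∈ orthogonalGroup ι K := by
  rw [mem_orthogonalGroup_iff', transpose_dotReflection, dotReflection_mul_self hv]

theorem dotReflection_mul_mem_specialOrthogonalGroup {u v : ι → K} (hu : u ⬝ᵥ u ≠ 0)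
    (hv : v ⬝ᵥ v ≠ 0) : dotReflection u * dotReflection v ∈ specialOrthogonalGroup ι K := by
  refine mem_specialOrthogonalGroup_iff.mpr
    ⟨mul_mem (dotReflection_mem_orthogonalGroup hu) (dotReflection_mem_orthogonalGroup hv), ?_⟩
  rw [det_mul, det_dotReflection hu, det_dotReflection hv, neg_mul_neg, one_mul]

theorem dotReflection_mulVec_of_dotProduct_eq_zero {v x : ι → K} (h : v ⬝ᵥ x = 0) :
    dotReflection v *ᵥ x = x := by
  simp [dotReflection_mulVec, h]

theorem dotReflection_sub_mulVec [NeZero (2 : K)] {x y : ι → K} (hx : x ⬝ᵥ x = 0)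
    (hy : y ⬝ᵥ y = 0) (hxy : x ⬝ᵥ y ≠ 0) : dotReflection (x - y) *ᵥ x = y := by
  have hvx : (x - y) ⬝ᵥ x = -(x ⬝ᵥ y) := by
    rw [sub_dotProduct, hx, dotProduct_comm y x, zero_sub]
  rw [dotReflection_mulVec, sub_dotProduct_sub_of_isotropic hx hy, hvx, mul_neg,
    neg_div_neg_eq, div_self (mul_ne_zero two_ne_zero hxy), one_smul, sub_sub_cancel]

theorem exists_mem_specialOrthogonalGroup_mulVec_eq_of_isotropic [NeZero (2 : K)]
    (hcard : 3 ≤ Fintype.card ι) {x y : ι → K} (hx0 : x ≠ 0) (hy0 : y ≠ 0)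
    (hx : x ⬝ᵥ x = 0) (hy : y ⬝ᵥ y = 0) :
    ∃ A ∈ specialOrthogonalGroup ι K, A *ᵥ x = y := by
  by_cases hxy : x ⬝ᵥ y = 0
  · obtain ⟨w, hw, hxw, hwy⟩ := exists_isotropic_dotProduct_ne_zero hx0 hy0 hx hxy
    refine ⟨dotReflection (w - y) * dotReflection (x - w),
      dotReflection_mul_mem_specialOrthogonalGroup (sub_dotProduct_sub_ne_zero hw hy hwy)
        (sub_dotProduct_sub_ne_zero hx hw hxw), ?_⟩
    rw [← mulVec_mulVec, dotReflection_sub_mulVec hx hw hxw, dotReflection_sub_mulVec hw hy hwy]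
  · obtain ⟨u, huy, hu⟩ := exists_anisotropic_dotProduct_eq_zero hcard hy0
    refine ⟨dotReflection u * dotReflection (x - y),
      dotReflection_mul_mem_specialOrthogonalGroup hu (sub_dotProduct_sub_ne_zero hx hy hxy), ?_⟩
    rw [← mulVec_mulVec, dotReflection_sub_mulVec hx hy hxy,
      dotReflection_mulVec_of_dotProduct_eq_zero huy]

end Matrix

/-- For `n ≥ 3`, the punctured null cone `D₀ ∖ {0}` is a single `SO(n,ℂ)`-orbit:
the complex special orthogonal group acts transitively on nonzero null vectors. -/
theorem stmt10 (n : ℕ) (hn : 3 ≤ n) (z z' : Fin n → ℂ)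
    (hz0 : z ≠ 0) (hz'0 : z' ≠ 0)
    (hz : ∑ j, z j ^ 2 = 0) (hz' : ∑ j, z' j ^ 2 = 0) :
    ∃ A : Matrix (Fin n) (Fin n) ℂ, Aᵀ * A = 1 ∧ A.det = 1 ∧ A.mulVec z = z' := by
  have hcard : 3 ≤ Fintype.card (Fin n) := by rwa [Fintype.card_fin]
  have hdot (v : Fin n → ℂ) (hv : ∑ j, v j ^ 2 = 0) : v ⬝ᵥ v = 0 := by
    simpa [dotProduct, sq] using hv
  obtain ⟨A, ⟨hA, hdet⟩, hAz⟩ :=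
    exists_mem_specialOrthogonalGroup_mulVec_eq_of_isotropic hcard hz0 hz'0 (hdot z hz) (hdot z' hz')
  exact ⟨A, (mem_orthogonalGroup_iff' (Fin n) ℂ).mp hA, hdet, hAz⟩
end

section
/- Let m ≤ n and let z, z' be m×n complex matrices satisfying z·zᴴ = 1 and z'·z'ᴴ = 1. If A is an m×m complex matrix with z' = A·z, then A is unitary: A·Aᴴ = 1 and Aᴴ·A = 1. Hence each GL(m,ℂ)-orbit intersects the constraint surface C = {w : w·wᴴ = 1} in at most one U(m)-orbit. -/
open Matrix

namespace Matrix

variable {m n R : Type*} [Fintype m] [DecidableEq m] [Fintype n] [Semiring R] [StarRing R]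

theorem mul_conjTranspose_self_eq_one_of_mul {A : Matrix m m R} {z : Matrix m n R}
    (hz : z * zᴴ = 1) (hAz : A * z * (A * z)ᴴ = 1) : A * Aᴴ = 1 := by
  calc A * Aᴴ = A * (z * zᴴ) * Aᴴ := by rw [hz, Matrix.mul_one]
    _ = A * z * (A * z)ᴴ := by simp only [conjTranspose_mul, Matrix.mul_assoc]
    _ = 1 := hAz

end Matrix

theorem stmt16_general (m n : ℕ) (z z' : Matrix (Fin m) (Fin n) ℂ)
    (hz : z * zᴴ = 1) (hz' : z' * z'ᴴ = 1)
    (A : Matrix (Fin m) (Fin m) ℂ) (hA : z' = A * z) :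
    A * Aᴴ = 1 ∧ Aᴴ * A = 1 := by
  subst hA
  have hAAh : A * Aᴴ = 1 := mul_conjTranspose_self_eq_one_of_mul hz hz'
  exact ⟨hAAh, mul_eq_one_comm.mp hAAh⟩

/-- Each `GL(m,ℂ)`-orbit meets the constraint surface `C = {w : w·wᴴ = 1}` in at
most one `U(m)`-orbit: if `z, z' ∈ C` and `z' = A·z`, then `A` is unitary. -/
theorem stmt16 (m n : ℕ) (hmn : m ≤ n) (z z' : Matrix (Fin m) (Fin n) ℂ)
    (hz : z * zᴴ = 1) (hz' : z' * z'ᴴ = 1)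
    (A : Matrix (Fin m) (Fin m) ℂ) (hA : z' = A * z) :
    A * Aᴴ = 1 ∧ Aᴴ * A = 1 :=
  stmt16_general m n z z' hz hz' A hA
end
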